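/- Let p be an odd prime, let k ≥ 2 be a divisor of p − 1, let g be a generator of F_p^*, and let χ_k be the multiplicative character of F_p of order k given by χ_k(g^t) = exp(2π√−1·t/k) (with χ_k(0) = 0). Let φ_a (for a ∈ F_p) denote the columns of Φ_p^{(k)}. Then for every pair of disjoint subsets I, J ⊆ F_p, |⟨Σ_{i∈I} φ_i, Σ_{j∈J} φ_j⟩| ≤ p^{−1/2}·Σ_{h=1}^{k−1} |Σ_{i∈I, j∈J} χ_k^{−h}(i−j)|. -/

import Mathlib

/-!
Expanding bilinearly reduces everything to the columns: for `i ≠ j`,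
`⟨φ_i, φ_j⟩ = p⁻¹ (1 + k ∑_{b ∈ R} ψ(b (i - j)))`. The residues `R` form the kernel of `χ_k`,
so on `F_p^*` the indicator of `R` is `k⁻¹ ∑_{h < k} χ_k^h`; this turns the sum over `R` into
the Gauss sums `∑_{h < k} χ_k^{-h}(i - j) G(χ_k^h)`, whose `h = 0` term is `-1` and cancels the
`1`. The bound then follows from the triangle inequality and `|G(χ_k^h)| = √p` for
`1 ≤ h ≤ k - 1`.
-/

/-- The canonical additive character `ψ` of `F_p`, `ψ(x) = exp(2π√−1·x/p)`. -/
noncomputable def psi (p : ℕ) (x : ZMod p) : ℂ :=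
  Complex.exp (2 * Real.pi * Complex.I * (x.val : ℂ) / (p : ℂ))

/-- The `((p+k−1)/k) × p` matrix `Φ_p^{(k)}`: columns indexed by `a ∈ F_p`;
rows indexed by `Option R_p^{(k)}` where `R_p^{(k)}` is the set of nonzero `k`-th
power residues.  The `none` row has entries `1/√p`, and the row of `b ∈ R_p^{(k)}`
has entries `√(k/p)·ψ(b·a)`. -/
noncomputable def Phi (p k : ℕ) :
    Matrix (Option {b : ZMod p // ∃ x : ZMod p, x ≠ 0 ∧ x ^ k = b}) (ZMod p) ℂ :=
  fun r a =>
    match r with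
    | none => ((1 / Real.sqrt p : ℝ) : ℂ)
    | some b => ((Real.sqrt ((k : ℝ) / (p : ℝ)) : ℝ) : ℂ) * psi p (b.1 * a)

open Finset ComplexConjugate

section Generator

variable {F M : Type*} [Field F] [CommMonoidWithZero M] {g : F} {χ : F → M} {ζ : M}

def mulCharOfGenerator (hg : ∀ x : F, x ≠ 0 → ∃ t : ℕ, g ^ t = x) (h0 : χ 0 = 0)
    (hχ : ∀ t : ℕ, χ (g ^ t) = ζ ^ t) : MulChar F M where
  toFun := χ
  map_one' := by simpa using hχ 0
  map_mul' x y := by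
    rcases eq_or_ne x 0 with rfl | hx
    · simp [h0]
    rcases eq_or_ne y 0 with rfl | hy
    · simp [h0]
    obtain ⟨s, rfl⟩ := hg x hx
    obtain ⟨t, rfl⟩ := hg y hy
    rw [← pow_add, hχ, hχ, hχ, pow_add]
  map_nonunit' x hx := by rw [isUnit_iff_ne_zero, not_not] at hx; rw [hx, h0]

@[simp]
lemma coe_mulCharOfGenerator (hg : ∀ x : F, x ≠ 0 → ∃ t : ℕ, g ^ t = x) (h0 : χ 0 = 0)
    (hχ : ∀ t : ℕ, χ (g ^ t) = ζ ^ t) : ⇑(mulCharOfGenerator hg h0 hχ) = χ :=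
  rfl

lemma orderOf_mulCharOfGenerator (hg : ∀ x : F, x ≠ 0 → ∃ t : ℕ, g ^ t = x) (h0 : χ 0 = 0)
    (hχ : ∀ t : ℕ, χ (g ^ t) = ζ ^ t) (hζ : ζ ≠ 0) :
    orderOf (mulCharOfGenerator hg h0 hχ) = orderOf ζ := by
  have hg0 : g ≠ 0 := by
    rintro rfl
    exact hζ (by simpa [h0] using (hχ 1).symm)
  refine orderOf_eq_orderOf_iff.mpr fun n ↦ ⟨fun h ↦ ?_, fun h ↦ MulChar.ext fun u ↦ ?_⟩
  · have := congr($h (Units.mk0 g hg0))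
    rwa [MulChar.pow_apply_coe, MulChar.one_apply_coe, Units.val_mk0, coe_mulCharOfGenerator,
      ← pow_one g, hχ, pow_one] at this
  · obtain ⟨t, ht⟩ := hg u u.ne_zero
    rw [MulChar.pow_apply_coe, MulChar.one_apply_coe, coe_mulCharOfGenerator, ← ht, hχ,
      ← pow_mul, mul_comm, pow_mul, h, one_pow]

lemma apply_eq_one_iff_exists_pow_eq [Nontrivial M] {k : ℕ}
    (hg : ∀ x : F, x ≠ 0 → ∃ t : ℕ, g ^ t = x) (h0 : χ 0 = 0)
    (hχ : ∀ t : ℕ, χ (g ^ t) = ζ ^ t) (hζ : IsPrimitiveRoot ζ k) (hk : k ≠ 0) (b : F) :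
    χ b = 1 ↔ ∃ x, x ≠ 0 ∧ x ^ k = b := by
  constructor
  · intro hb
    have hb0 : b ≠ 0 := by
      rintro rfl
      exact zero_ne_one (h0 ▸ hb)
    obtain ⟨t, rfl⟩ := hg b hb0
    obtain ⟨m, rfl⟩ := hζ.dvd_of_pow_eq_one t (hχ t ▸ hb)
    rw [mul_comm, pow_mul] at hb0 ⊢
    exact ⟨g ^ m, ne_zero_pow hk hb0, rfl⟩
  · rintro ⟨x, hx, rfl⟩
    obtain ⟨t, rfl⟩ := hg x hx
    rw [← pow_mul, hχ, mul_comm, pow_mul, hζ.pow_eq_one, one_pow]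

end Generator

section Orthogonality

variable {F R : Type*} [Field F] [CommRing R] [IsDomain R] [DecidableEq R]

lemma MulChar.sum_range_pow_apply {χ : MulChar F R} {k : ℕ} (hk : χ ^ k = 1) (b : F) :
    ∑ h ∈ range k, (χ ^ h) b = if χ b = 1 then (k : R) else 0 := by
  rcases eq_or_ne b 0 with rfl | hb
  · simp
  have hpow (h : ℕ) : (χ ^ h) b = χ b ^ h := MulChar.pow_apply_coe χ h (Units.mk0 b hb)
  simp_rw [hpow]
  split_ifs with h1
  · simp [h1]
  · have hχk : χ b ^ k = 1 := by rw [← hpow, hk, MulChar.one_apply (isUnit_iff_ne_zero.mpr hb)]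
    have := geom_sum_mul (χ b) k
    rw [hχk, sub_self] at this
    exact (mul_eq_zero.mp this).resolve_right (sub_ne_zero.mpr h1)

lemma card_mul_sum_ker_eq_sum_gaussSum [Fintype F] {χ : MulChar F R} {k : ℕ} (hk : χ ^ k = 1)
    (ψ : AddChar F R) {d : F} (hd : d ≠ 0) :
    (k : R) * ∑ b ∈ univ.filter (χ · = 1), ψ (b * d) =
      ∑ h ∈ range k, (χ ^ h)⁻¹ d * gaussSum (χ ^ h) ψ := by
  calc (k : R) * ∑ b ∈ univ.filter (χ · = 1), ψ (b * d)
      = ∑ b, ∑ h ∈ range k, (χ ^ h) b * ψ.mulShift d b := by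
        simp_rw [← sum_mul, MulChar.sum_range_pow_apply hk, ite_mul, zero_mul,
          mul_sum, sum_filter, AddChar.mulShift_apply, mul_comm d]
    _ = ∑ h ∈ range k, gaussSum (χ ^ h) (ψ.mulShift (Units.mk0 d hd)) := by
        rw [sum_comm]; rfl
    _ = _ := by simp_rw [gaussSum_mulShift_eq, Units.val_mk0]

end Orthogonality

lemma norm_gaussSum_eq_sqrt_card {F : Type*} [Field F] [Fintype F] {χ : MulChar F ℂ}
    (hχ : χ ≠ 1) {ψ : AddChar F ℂ} (hψ : ψ.IsPrimitive) : ‖gaussSum χ ψ‖ = √(Fintype.card F) := by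
  have h := gaussSum_mul_gaussSum_eq_card hχ hψ
  rw [← star_gaussSum_eq, Complex.star_def, Complex.mul_conj] at h
  rw [Complex.norm_def, Complex.ofReal_injective (h.trans (by norm_cast))]

lemma psi_eq_stdAddChar (p : ℕ) [NeZero p] : psi p = ZMod.stdAddChar := by
  funext x
  rw [ZMod.stdAddChar_apply, ZMod.toCircle_apply]
  rfl

lemma sum_Phi_mul_conj_Phi (p k : ℕ) [NeZero p] (i j : ZMod p) :
    ∑ r, Phi p k r i * conj (Phi p k r j) =
      (p : ℂ)⁻¹ * (1 + k * ∑ b ∈ univ.filter (fun b : ZMod p => ∃ x, x ≠ 0 ∧ x ^ k = b),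
        psi p (b * (i - j))) := by
  have hnone : Phi p k none i * conj (Phi p k none j) = (p : ℂ)⁻¹ := by
    simp only [Phi]
    rw [Complex.conj_ofReal, ← Complex.ofReal_mul, div_mul_div_comm, one_mul,
      Real.mul_self_sqrt (Nat.cast_nonneg _)]
    push_cast; ring
  have hsome (b : {b : ZMod p // ∃ x : ZMod p, x ≠ 0 ∧ x ^ k = b}) :
      Phi p k (some b) i * conj (Phi p k (some b) j) = (p : ℂ)⁻¹ * k * psi p (b * (i - j)) := by
    simp only [Phi]
    rw [map_mul, Complex.conj_ofReal, psi_eq_stdAddChar, ← AddChar.map_neg_eq_conj,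
      mul_mul_mul_comm, ← Complex.ofReal_mul, Real.mul_self_sqrt (by positivity),
      ← AddChar.map_add_eq_mul, mul_sub, sub_eq_add_neg]
    push_cast; ring
  rw [Fintype.sum_option, hnone, Fintype.sum_congr _ _ hsome, ← mul_sum,
    ← sum_subtype (univ.filter fun b : ZMod p => ∃ x, x ≠ 0 ∧ x ^ k = b) (by simp)
      (fun b => psi p (b * (i - j)))]
  ring

section Bound

variable {p k : ℕ} [Fact p.Prime] {χ : MulChar (ZMod p) ℂ}

lemma sum_Phi_mul_conj_Phi_eq_sum_gaussSum (hord : orderOf χ = k)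
    (hker : ∀ b, χ b = 1 ↔ ∃ x, x ≠ 0 ∧ x ^ k = b) {i j : ZMod p} (hij : i ≠ j) :
    ∑ r, Phi p k r i * conj (Phi p k r j) =
      (p : ℂ)⁻¹ * ∑ h ∈ Icc 1 (k - 1), (χ ^ h)⁻¹ (i - j) * gaussSum (χ ^ h) ZMod.stdAddChar := by
  have hk : 0 < k := hord ▸ χ.orderOf_pos
  have hψ : (ZMod.stdAddChar : AddChar (ZMod p) ℂ) ≠ 1 := by
    simpa using ZMod.isPrimitive_stdAddChar p one_ne_zero
  have hIco : Ico 1 k = Icc 1 (k - 1) := by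
    ext h
    simp only [mem_Ico, mem_Icc]
    omega
  rw [sum_Phi_mul_conj_Phi, psi_eq_stdAddChar, filter_congr fun b _ ↦ (hker b).symm,
    card_mul_sum_ker_eq_sum_gaussSum (hord ▸ pow_orderOf_eq_one χ) _ (sub_ne_zero.mpr hij),
    sum_range_eq_add_Ico _ hk, pow_zero, inv_one, gaussSum_one_left hψ, hIco,
    MulChar.one_apply (isUnit_iff_ne_zero.mpr (sub_ne_zero.mpr hij)), one_mul,
    add_neg_cancel_left]

lemma norm_sum_Phi_mul_conj_sum_Phi_le (hord : orderOf χ = k)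
    (hker : ∀ b, χ b = 1 ↔ ∃ x, x ≠ 0 ∧ x ^ k = b) {I J : Finset (ZMod p)} (hIJ : Disjoint I J) :
    ‖∑ r, (∑ i ∈ I, Phi p k r i) * conj (∑ j ∈ J, Phi p k r j)‖ ≤
      (p : ℝ) ^ (-(1 : ℝ) / 2) * ∑ h ∈ Icc 1 (k - 1), ‖∑ i ∈ I, ∑ j ∈ J, (χ ^ h)⁻¹ (i - j)‖ := by
  set G : ℕ → ℂ := fun h ↦ gaussSum (χ ^ h) ZMod.stdAddChar
  have hexpand : ∑ r, (∑ i ∈ I, Phi p k r i) * conj (∑ j ∈ J, Phi p k r j) =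
      (p : ℂ)⁻¹ * ∑ h ∈ Icc 1 (k - 1), G h * ∑ i ∈ I, ∑ j ∈ J, (χ ^ h)⁻¹ (i - j) :=
    calc _ = ∑ i ∈ I, ∑ j ∈ J, ∑ r, Phi p k r i * conj (Phi p k r j) := by
          simp_rw [map_sum, sum_mul_sum]
          rw [sum_comm]
          exact sum_congr rfl fun _ _ ↦ sum_comm
      _ = ∑ i ∈ I, ∑ j ∈ J, (p : ℂ)⁻¹ * ∑ h ∈ Icc 1 (k - 1), (χ ^ h)⁻¹ (i - j) * G h :=
          sum_congr rfl fun i hi ↦ sum_congr rfl fun j hj ↦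
            sum_Phi_mul_conj_Phi_eq_sum_gaussSum hord hker
              fun hij ↦ disjoint_left.mp hIJ hi (hij ▸ hj)
      _ = _ := by
          simp_rw [mul_sum]
          refine ((sum_congr rfl fun _ _ ↦ sum_comm).trans sum_comm).trans
            (sum_congr rfl fun _ _ ↦ sum_congr rfl fun _ _ ↦ sum_congr rfl fun _ _ ↦ by ring)
  have hG : ∀ h ∈ Icc 1 (k - 1), ‖G h‖ = √p := fun h hh ↦ by
    rw [mem_Icc] at hh
    rw [norm_gaussSum_eq_sqrt_card (pow_ne_one_of_lt_orderOf (by omega) (by omega))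
      (ZMod.isPrimitive_stdAddChar p), ZMod.card]
  have hp : (p : ℝ)⁻¹ * √p = (p : ℝ) ^ (-(1 : ℝ) / 2) := by
    have hp0 : (0 : ℝ) < p := Nat.cast_pos.mpr (Fact.out : p.Prime).pos
    rw [neg_div, Real.rpow_neg hp0.le, ← Real.sqrt_eq_rpow]
    field_simp
    exact Real.sq_sqrt hp0.le
  calc _ ≤ (p : ℝ)⁻¹ * ∑ h ∈ Icc 1 (k - 1), ‖G h‖ * ‖∑ i ∈ I, ∑ j ∈ J, (χ ^ h)⁻¹ (i - j)‖ := by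
        rw [hexpand, norm_mul, norm_inv, Complex.norm_natCast]
        gcongr
        exact (norm_sum_le _ _).trans_eq (by simp_rw [norm_mul])
    _ = _ := by rw [sum_congr rfl fun h hh ↦ by rw [hG h hh], ← mul_sum, ← mul_assoc, hp]

end Bound

theorem stmt_7_general (p : ℕ) (hp : p.Prime) [NeZero p]
    (k : ℕ) (hk2 : 2 ≤ k)
    (g : ZMod p) (hg : ∀ x : ZMod p, x ≠ 0 → ∃ t : ℕ, g ^ t = x)
    (χk : ZMod p → ℂ) (hχ0 : χk 0 = 0)
    (hχ : ∀ t : ℕ, χk (g ^ t) =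
      Complex.exp (2 * Real.pi * Complex.I * (t : ℂ) / (k : ℂ))) :
    ∀ I J : Finset (ZMod p), Disjoint I J →
      ‖∑ r, (∑ i ∈ I, Phi p k r i) * (starRingEnd ℂ) (∑ j ∈ J, Phi p k r j)‖ ≤
        (p : ℝ) ^ (-(1 : ℝ) / 2) *
          ∑ h ∈ Finset.Icc 1 (k - 1),
            ‖∑ i ∈ I, ∑ j ∈ J, (χk (i - j)) ^ (-(h : ℤ))‖ := by
  intro I J hIJ
  have : Fact p.Prime := ⟨hp⟩
  have hk : k ≠ 0 := by omega
  have hζ := Complex.isPrimitiveRoot_exp k hk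
  have hχζ (t : ℕ) : χk (g ^ t) = Complex.exp (2 * Real.pi * Complex.I / k) ^ t := by
    rw [hχ, ← Complex.exp_nat_mul]
    ring_nf
  set χ := mulCharOfGenerator hg hχ0 hχζ
  have hord : orderOf χ = k :=
    (orderOf_mulCharOfGenerator hg hχ0 hχζ (hζ.ne_zero hk)).trans hζ.eq_orderOf.symm
  have hχh : ∀ h ∈ Icc 1 (k - 1), ∀ x, (χ ^ h)⁻¹ x = χk x ^ (-(h : ℤ)) := fun h hh x ↦ by
    rw [MulChar.inv_apply_eq_inv', MulChar.pow_apply' _ (by rw [mem_Icc] at hh; omega), zpow_neg,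
      zpow_natCast, coe_mulCharOfGenerator]
  refine (norm_sum_Phi_mul_conj_sum_Phi_le hord
    (apply_eq_one_iff_exists_pow_eq hg hχ0 hχζ hζ hk) hIJ).trans_eq ?_
  congr 1
  exact sum_congr rfl fun h hh ↦ by simp_rw [hχh h hh]

/-- for an odd prime `p`, a divisor `k ≥ 2` of `p − 1`, a generator `g`
of `F_p^*`, and the multiplicative character `χ_k` of order `k` with
`χ_k(g^t) = exp(2π√−1·t/k)` and `χ_k(0) = 0`, for every pair of disjoint subsets
`I, J ⊆ F_p` one has
`|⟨Σ_{i∈I} φ_i, Σ_{j∈J} φ_j⟩| ≤ p^{−1/2}·Σ_{h=1}^{k−1} |Σ_{i∈I,j∈J} χ_k^{−h}(i−j)|`,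
where `χ_k^{−h}(x) = (χ_k x)^{−h}`. -/
theorem stmt_7 (p : ℕ) (hp : p.Prime) (hodd : p ≠ 2) [NeZero p]
    (k : ℕ) (hk2 : 2 ≤ k) (hkdvd : k ∣ p - 1)
    (g : ZMod p) (hg : ∀ x : ZMod p, x ≠ 0 → ∃ t : ℕ, g ^ t = x)
    (χk : ZMod p → ℂ) (hχ0 : χk 0 = 0)
    (hχ : ∀ t : ℕ, χk (g ^ t) =
      Complex.exp (2 * Real.pi * Complex.I * (t : ℂ) / (k : ℂ))) :
    ∀ I J : Finset (ZMod p), Disjoint I J →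
      ‖∑ r, (∑ i ∈ I, Phi p k r i) * (starRingEnd ℂ) (∑ j ∈ J, Phi p k r j)‖ ≤
        (p : ℝ) ^ (-(1 : ℝ) / 2) *
          ∑ h ∈ Finset.Icc 1 (k - 1),
            ‖∑ i ∈ I, ∑ j ∈ J, (χk (i - j)) ^ (-(h : ℤ))‖ :=
  stmt_7_general p hp k hk2 g hg χk hχ0 hχ
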